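/- Let P_n, P be Borel probability measures on a separable metric space S such that P_n → P weakly and P_n(ψ) → P(ψ) ∈ (0,∞) for some continuous function ψ: S → [0,∞), where P(ψ) = ∫ ψ dP. Then the ψ-biased probability measures converge weakly: P_n^ψ → P^ψ, where P^ψ(A) = (∫_A ψ dP)/P(ψ). -/

import Mathlib

/-!
Truncating a continuous `g ≥ 0` at a level `m` gives a bounded continuous function whose
integrals converge under weak convergence, and `∫ min g m ↑ ∫ g`; so weak convergence already
makes `∫ g` lower semicontinuous. If `|h| ≤ g` and `∫ g dPₙ → ∫ g dP`, lower semicontinuity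
applied to `g + h` and `g - h` squeezes `∫ h dPₙ → ∫ h dP`. Taking `g = C ψ` and `h = ψ φ` for
`|φ| ≤ C` shows `∫ ψ φ dPₙ → ∫ ψ φ dP`, and `P^ψ(φ) = P(ψ φ) / P(ψ)`.
-/

open MeasureTheory Filter
open scoped Topology

noncomputable section

/-- The `ψ`-biased probability measure `P^ψ(A) = (∫_A ψ dP)/P(ψ)`. -/
def biasedMeasure {S : Type*} [MeasurableSpace S] (P : Measure S) (ψ : S → ℝ) :
    Measure S :=
  (ENNReal.ofReal (∫ z, ψ z ∂P))⁻¹ • P.withDensity fun z => ENNReal.ofReal (ψ z)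

lemma integral_biasedMeasure {S : Type*} [MeasurableSpace S] (P : Measure S) {ψ : S → ℝ}
    (hψ : Measurable ψ) (hψ0 : ∀ z, 0 ≤ ψ z) (φ : S → ℝ) :
    ∫ z, φ z ∂(biasedMeasure P ψ) = (∫ z, ψ z ∂P)⁻¹ * ∫ z, ψ z * φ z ∂P := by
  rw [biasedMeasure, integral_smul_measure,
    integral_withDensity_eq_integral_toReal_smul hψ.ennreal_ofReal
      (ae_of_all _ fun _ => ENNReal.ofReal_lt_top),
    ENNReal.toReal_inv, ENNReal.toReal_ofReal (integral_nonneg hψ0), smul_eq_mul]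
  simp only [ENNReal.toReal_ofReal (hψ0 _), smul_eq_mul]

section WeakConvergence

variable {S ι : Type*} [TopologicalSpace S] [MeasurableSpace S] [OpensMeasurableSpace S]
  {μ : ι → Measure S} {ν : Measure S} {l : Filter ι}

lemma tendsto_integral_min_const {g : S → ℝ} (hgc : Continuous g) (hg0 : ∀ z, 0 ≤ g z)
    (hg : Integrable g ν) :
    Tendsto (fun m : ℕ => ∫ z, min (g z) (m : ℝ) ∂ν) atTop (𝓝 (∫ z, g z ∂ν)) := by
  refine tendsto_integral_of_dominated_convergence g
    (fun m => (hgc.min continuous_const).aestronglyMeasurable) hg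
    (fun m => ae_of_all _ fun z => ?_) (ae_of_all _ fun z => ?_)
  · rw [Real.norm_eq_abs, abs_of_nonneg (le_min (hg0 z) m.cast_nonneg)]
    exact min_le_left _ _
  · obtain ⟨N, hN⟩ := exists_nat_ge (g z)
    exact tendsto_const_nhds.congr' <| eventually_atTop.2
      ⟨N, fun m hm => (min_eq_left (hN.trans (Nat.cast_le.2 hm))).symm⟩

variable (hweak : ∀ φ : S → ℝ, Continuous φ → (∃ C, ∀ z, |φ z| ≤ C) →
  Tendsto (fun i => ∫ z, φ z ∂(μ i)) l (𝓝 (∫ z, φ z ∂ν)))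
include hweak

lemma eventually_lt_integral_of_nonneg {g : S → ℝ} (hgc : Continuous g) (hg0 : ∀ z, 0 ≤ g z)
    (hgμ : ∀ i, Integrable g (μ i)) (hgν : Integrable g ν) {a : ℝ} (ha : a < ∫ z, g z ∂ν) :
    ∀ᶠ i in l, a < ∫ z, g z ∂(μ i) := by
  obtain ⟨m, hm⟩ := ((tendsto_integral_min_const hgc hg0 hgν).eventually
    (eventually_gt_nhds ha)).exists
  have htrunc_c : Continuous fun z => min (g z) (m : ℝ) := hgc.min continuous_const
  have htrunc_abs : ∀ z, |min (g z) (m : ℝ)| ≤ g z := fun z => by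
    rw [abs_of_nonneg (le_min (hg0 z) m.cast_nonneg)]; exact min_le_left _ _
  have htrunc_bdd : ∀ z, |min (g z) (m : ℝ)| ≤ m := fun z => by
    rw [abs_of_nonneg (le_min (hg0 z) m.cast_nonneg)]; exact min_le_right _ _
  filter_upwards [(hweak _ htrunc_c ⟨m, htrunc_bdd⟩).eventually (eventually_gt_nhds hm)]
    with i hi
  refine hi.trans_le (integral_mono ?_ (hgμ i) fun z => min_le_left _ _)
  exact (hgμ i).mono' htrunc_c.aestronglyMeasurable (ae_of_all _ htrunc_abs)

lemma eventually_lt_integral_of_abs_le {g h : S → ℝ} (hgc : Continuous g) (hhc : Continuous h)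
    (hhg : ∀ z, |h z| ≤ g z) (hgμ : ∀ i, Integrable g (μ i)) (hgν : Integrable g ν)
    (hlim : Tendsto (fun i => ∫ z, g z ∂(μ i)) l (𝓝 (∫ z, g z ∂ν)))
    {a : ℝ} (ha : a < ∫ z, h z ∂ν) :
    ∀ᶠ i in l, a < ∫ z, h z ∂(μ i) := by
  have hh : ∀ ρ : Measure S, Integrable g ρ → Integrable h ρ := fun ρ hg =>
    hg.mono' hhc.aestronglyMeasurable (ae_of_all _ hhg)
  have hsum : ∀ ρ : Measure S, Integrable g ρ →
      ∫ z, (g z + h z) ∂ρ = ∫ z, g z ∂ρ + ∫ z, h z ∂ρ := fun ρ hg =>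
    integral_add hg (hh ρ hg)
  set δ := (∫ z, h z ∂ν - a) / 2
  have hsum_lower : ∀ᶠ i in l, ∫ z, (g z + h z) ∂ν - δ < ∫ z, (g z + h z) ∂(μ i) :=
    eventually_lt_integral_of_nonneg (g := fun z => g z + h z) hweak
      (hgc.add hhc)
      (fun z => by linarith [neg_abs_le (h z), hhg z])
      (fun i => (hgμ i).add (hh _ (hgμ i))) (hgν.add (hh _ hgν))
      (by simp only [δ]; linarith)
  have hg_upper : ∀ᶠ i in l, ∫ z, g z ∂(μ i) < ∫ z, g z ∂ν + δ :=
    hlim.eventually (eventually_lt_nhds (by simp only [δ]; linarith))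
  filter_upwards [hsum_lower, hg_upper] with i hi hi'
  rw [hsum _ (hgμ i), hsum _ hgν] at hi
  simp only [δ] at hi hi'
  linarith

theorem tendsto_integral_of_abs_le {g h : S → ℝ} (hgc : Continuous g) (hhc : Continuous h)
    (hhg : ∀ z, |h z| ≤ g z) (hgμ : ∀ i, Integrable g (μ i)) (hgν : Integrable g ν)
    (hlim : Tendsto (fun i => ∫ z, g z ∂(μ i)) l (𝓝 (∫ z, g z ∂ν))) :
    Tendsto (fun i => ∫ z, h z ∂(μ i)) l (𝓝 (∫ z, h z ∂ν)) := by
  refine tendsto_order.2 ⟨fun a ha =>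
    eventually_lt_integral_of_abs_le hweak hgc hhc hhg hgμ hgν hlim ha, fun a ha => ?_⟩
  have hneg := eventually_lt_integral_of_abs_le (h := fun z => -h z) hweak hgc hhc.neg
    (fun z => (abs_neg (h z)).trans_le (hhg z)) hgμ hgν hlim (a := -a)
    (by rw [integral_neg]; linarith)
  filter_upwards [hneg] with i hi
  rw [integral_neg] at hi
  linarith

end WeakConvergence

theorem biased_weak_convergence_general
    {S : Type*} [MetricSpace S]
    [MeasurableSpace S] [BorelSpace S]
    (Pn : ℕ → Measure S) (P : Measure S)
    (ψ : S → ℝ) (hψc : Continuous ψ) (hψ0 : ∀ z, 0 ≤ ψ z)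
    (hweak : ∀ φ : S → ℝ, Continuous φ → (∃ C, ∀ z, |φ z| ≤ C) →
      Tendsto (fun n => ∫ z, φ z ∂(Pn n)) atTop (𝓝 (∫ z, φ z ∂P)))
    (hintn : ∀ n, Integrable ψ (Pn n)) (hint : Integrable ψ P)
    (hpos : 0 < ∫ z, ψ z ∂P)
    (hlim : Tendsto (fun n => ∫ z, ψ z ∂(Pn n)) atTop (𝓝 (∫ z, ψ z ∂P))) :
    ∀ φ : S → ℝ, Continuous φ → (∃ C, ∀ z, |φ z| ≤ C) →
      Tendsto (fun n => ∫ z, φ z ∂(biasedMeasure (Pn n) ψ)) atTop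
        (𝓝 (∫ z, φ z ∂(biasedMeasure P ψ))) := by
  rintro φ hφc ⟨C, hC⟩
  have hψφ_le : ∀ z, |ψ z * φ z| ≤ C * ψ z := fun z => by
    rw [abs_mul, abs_of_nonneg (hψ0 z), mul_comm]
    exact mul_le_mul_of_nonneg_right (hC z) (hψ0 z)
  have hCψ_lim :
      Tendsto (fun n => ∫ z, C * ψ z ∂(Pn n)) atTop (𝓝 (∫ z, C * ψ z ∂P)) := by
    simpa only [integral_const_mul] using hlim.const_mul C
  have hψφ_lim := tendsto_integral_of_abs_le hweak (continuous_const.mul hψc) (hψc.mul hφc)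
    hψφ_le (fun n => (hintn n).const_mul C) (hint.const_mul C) hCψ_lim
  simp only [integral_biasedMeasure _ hψc.measurable hψ0]
  exact (hlim.inv₀ hpos.ne').mul hψφ_lim

/-- **Lemma (weak convergence of biased measures).**
Let `P_n, P` be Borel probability measures on a separable metric space with
`P_n → P` weakly and `P_n(ψ) → P(ψ) ∈ (0,∞)` for a continuous `ψ ≥ 0`. Then the
`ψ`-biased measures converge weakly: `P_n^ψ → P^ψ`. -/
theorem biased_weak_convergence
    {S : Type*} [MetricSpace S] [TopologicalSpace.SeparableSpace S]
    [MeasurableSpace S] [BorelSpace S]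
    (Pn : ℕ → Measure S) (P : Measure S)
    (hPn : ∀ n, IsProbabilityMeasure (Pn n)) (hP : IsProbabilityMeasure P)
    (ψ : S → ℝ) (hψc : Continuous ψ) (hψ0 : ∀ z, 0 ≤ ψ z)
    (hweak : ∀ φ : S → ℝ, Continuous φ → (∃ C, ∀ z, |φ z| ≤ C) →
      Tendsto (fun n => ∫ z, φ z ∂(Pn n)) atTop (𝓝 (∫ z, φ z ∂P)))
    (hintn : ∀ n, Integrable ψ (Pn n)) (hint : Integrable ψ P)
    (hpos : 0 < ∫ z, ψ z ∂P)
    (hlim : Tendsto (fun n => ∫ z, ψ z ∂(Pn n)) atTop (𝓝 (∫ z, ψ z ∂P))) :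
    ∀ φ : S → ℝ, Continuous φ → (∃ C, ∀ z, |φ z| ≤ C) →
      Tendsto (fun n => ∫ z, φ z ∂(biasedMeasure (Pn n) ψ)) atTop
        (𝓝 (∫ z, φ z ∂(biasedMeasure P ψ))) :=
  biased_weak_convergence_general Pn P ψ hψc hψ0 hweak hintn hint hpos hlim

end
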